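/- For the Haar measure μ on pure n-qubit states, any density matrix ρ, and any traceless Hermitian matrix O₀ (Tr(O₀)=0), it holds that 2^n(2^n+1)² · Tr((∫|φ⟩⟨φ|^{⊗3} dμ(φ)) · (ρ ⊗ O₀ ⊗ O₀)) ≤ 3·Tr(O₀²). -/

import Mathlib

open Matrix ComplexOrder

/-- The operator permuting the three tensor factors of `(ℂ^N)^{⊗3}` according to `π`. -/
noncomputable def permOp3 (N : ℕ) (π : Equiv.Perm (Fin 3)) :
    Matrix (Fin 3 → Fin N) (Fin 3 → Fin N) ℂ :=
  fun a b => if a = b ∘ π then 1 else 0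

/-- The projector onto the symmetric subspace of `(ℂ^N)^{⊗3}`:
`Π_{sym³} = (1/6)∑_{π∈S₃} W_π`. -/
noncomputable def symProj3 (N : ℕ) : Matrix (Fin 3 → Fin N) (Fin 3 → Fin N) ℂ :=
  ((6 : ℂ))⁻¹ • ∑ π : Equiv.Perm (Fin 3), permOp3 N π

/-- The third Haar moment `∫|φ⟩⟨φ|^{⊗3} dμ = Π_{sym³}/dim(sym³)` with
`dim(sym³) = N(N+1)(N+2)/6`. -/
noncomputable def haarMoment3 (N : ℕ) : Matrix (Fin 3 → Fin N) (Fin 3 → Fin N) ℂ :=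
  (((N : ℂ) * ((N : ℂ) + 1) * ((N : ℂ) + 2) / 6))⁻¹ • symProj3 N

/-- Threefold tensor (Kronecker) product as a matrix on `(ℂ^N)^{⊗3}`. -/
noncomputable def kron3 {N : ℕ} (A B C : Matrix (Fin N) (Fin N) ℂ) :
    Matrix (Fin 3 → Fin N) (Fin 3 → Fin N) ℂ :=
  fun a b => A (a 0) (b 0) * B (a 1) (b 1) * C (a 2) (b 2)

/-!
Let `N = 2^n`. Expanding `Π_{sym³}` into the six permutation operators, `Tr(W_π (A ⊗ B ⊗ C))`
is the product, over the cycles of `π`, of the traces of the corresponding products of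
`A, B, C`. With `Tr ρ = 1` and `Tr O₀ = 0` only the transposition of the two `O₀` factors and
the two 3-cycles survive, so the trace in question is `(Tr O₀² + 2 Tr(ρ O₀²)) / (N(N+1)(N+2))`.
A density matrix satisfies `ρ ≤ 1`, hence `Tr(ρ O₀²) = Tr(O₀ ρ O₀) ≤ Tr O₀²`, and
`(N+1)/(N+2) ≤ 1` finishes.
-/

open Finset

lemma Fintype.sum_fun_fin_three {α M : Type*} [Fintype α] [AddCommMonoid M]
    (f : (Fin 3 → α) → M) : ∑ a, f a = ∑ x, ∑ y, ∑ z, f ![x, y, z] := by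
  simp only [← (Fin.consEquiv fun _ => α).sum_comp, Fintype.sum_prod_type, Fintype.sum_unique]
  rfl

section PermTrace

variable {N : ℕ}

lemma trace_permOp3_mul (π : Equiv.Perm (Fin 3)) (M : Matrix (Fin 3 → Fin N) (Fin 3 → Fin N) ℂ) :
    (permOp3 N π * M).trace = ∑ a, M (a ∘ ⇑π⁻¹) a := by
  refine sum_congr rfl fun a _ => ?_
  rw [diag_apply, mul_apply, sum_eq_single (a ∘ ⇑π⁻¹)]
  · simp [permOp3, Function.comp_assoc]
  · intro b _ hb
    rw [permOp3, if_neg, zero_mul]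
    rintro rfl
    exact hb (by simp [Function.comp_assoc])
  · simp

variable (A B C : Matrix (Fin N) (Fin N) ℂ)

lemma trace_permOp3_one_mul_kron3 :
    (permOp3 N 1 * kron3 A B C).trace = A.trace * B.trace * C.trace := by
  rw [trace_permOp3_mul, Fintype.sum_fun_fin_three]
  simp only [kron3, inv_one, Equiv.Perm.coe_one, Function.comp_apply, id_eq, cons_val_zero,
    cons_val_one, Matrix.cons_val, trace, Matrix.diag, mul_sum, sum_mul]
  rw [sum_comm_cycle]
  exact sum_congr rfl fun _ _ => sum_comm

lemma trace_permOp3_swap_zero_one_mul_kron3 :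
    (permOp3 N (Equiv.swap 0 1) * kron3 A B C).trace = (A * B).trace * C.trace := by
  rw [trace_permOp3_mul, Fintype.sum_fun_fin_three]
  simp only [kron3, Equiv.swap_inv, Function.comp_apply, Equiv.swap_apply_left, cons_val_one,
    cons_val_zero, Equiv.swap_apply_right, Matrix.cons_val, trace, Matrix.diag, mul_apply, mul_sum,
    sum_mul]
  rw [sum_comm_cycle]
  exact sum_congr rfl fun _ _ => sum_comm

lemma trace_permOp3_swap_zero_two_mul_kron3 :
    (permOp3 N (Equiv.swap 0 2) * kron3 A B C).trace = (A * C).trace * B.trace := by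
  rw [trace_permOp3_mul, Fintype.sum_fun_fin_three]
  simp only [kron3, Equiv.swap_inv, Function.comp_apply, Equiv.swap_apply_left, Matrix.cons_val,
    cons_val_zero, ne_eq, Fin.reduceEq, not_false_eq_true, Equiv.swap_apply_of_ne_of_ne,
    cons_val_one, Equiv.swap_apply_right, trace, Matrix.diag, mul_apply, mul_sum, sum_mul]
  conv_lhs => rw [sum_comm_cycle, sum_comm_cycle]
  exact sum_congr rfl fun _ _ => sum_congr rfl fun _ _ => sum_congr rfl fun _ _ => by ring

lemma trace_permOp3_swap_one_two_mul_kron3 :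
    (permOp3 N (Equiv.swap 1 2) * kron3 A B C).trace = A.trace * (B * C).trace := by
  rw [trace_permOp3_mul, Fintype.sum_fun_fin_three]
  simp only [kron3, Equiv.swap_inv, Function.comp_apply, ne_eq, Fin.reduceEq, not_false_eq_true,
    Equiv.swap_apply_of_ne_of_ne, cons_val_zero, Equiv.swap_apply_left, Matrix.cons_val,
    cons_val_one, Equiv.swap_apply_right, trace, Matrix.diag, mul_apply, mul_sum, sum_mul]
  rw [sum_comm_cycle]
  refine sum_congr rfl fun _ _ => ?_
  rw [sum_comm]
  exact sum_congr rfl fun _ _ => sum_congr rfl fun _ _ => by ring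

lemma trace_permOp3_finRotate_mul_kron3 :
    (permOp3 N (finRotate 3) * kron3 A B C).trace = (A * B * C).trace := by
  rw [trace_permOp3_mul, Fintype.sum_fun_fin_three]
  simp only [kron3, Equiv.Perm.coe_inv, Function.comp_apply, finRotate_symm_apply, zero_sub,
    Matrix.cons_val, cons_val_zero, sub_self, cons_val_one, Fin.reduceSub, trace, Matrix.diag,
    mul_apply, sum_mul]
  rw [sum_comm_cycle]
  exact sum_congr rfl fun _ _ => sum_comm

lemma trace_permOp3_finRotate_inv_mul_kron3 :
    (permOp3 N (finRotate 3)⁻¹ * kron3 A B C).trace = (A * C * B).trace := by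
  rw [trace_permOp3_mul, Fintype.sum_fun_fin_three]
  simp only [kron3, inv_inv, Function.comp_apply, finRotate_apply, zero_add, cons_val_one,
    cons_val_zero, Fin.reduceAdd, Matrix.cons_val, trace, Matrix.diag, mul_apply, sum_mul]
  conv_lhs => rw [sum_comm_cycle, sum_comm_cycle]
  exact sum_congr rfl fun _ _ => sum_congr rfl fun _ _ => sum_congr rfl fun _ _ => by ring

lemma sum_trace_permOp3_mul_kron3 :
    ∑ π, (permOp3 N π * kron3 A B C).trace
      = A.trace * B.trace * C.trace + (A * B).trace * C.trace + (A * C).trace * B.trace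
        + A.trace * (B * C).trace + (A * B * C).trace + (A * C * B).trace := by
  have univ_perm_fin_three : (univ : Finset (Equiv.Perm (Fin 3))) =
      {1, Equiv.swap 0 1, Equiv.swap 0 2, Equiv.swap 1 2, finRotate 3, (finRotate 3)⁻¹} := by
    decide
  rw [univ_perm_fin_three, sum_insert (by decide), sum_insert (by decide), sum_insert (by decide),
    sum_insert (by decide), sum_insert (by decide), sum_singleton,
    trace_permOp3_one_mul_kron3, trace_permOp3_swap_zero_one_mul_kron3,
    trace_permOp3_swap_zero_two_mul_kron3, trace_permOp3_swap_one_two_mul_kron3,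
    trace_permOp3_finRotate_mul_kron3, trace_permOp3_finRotate_inv_mul_kron3]
  ring

end PermTrace

section Order

open scoped MatrixOrder

variable {n 𝕜 : Type*} [Fintype n] [RCLike 𝕜]

lemma Matrix.PosSemidef.le_one_of_trace_eq_one [DecidableEq n] {ρ : Matrix n n 𝕜}
    (hρ : ρ.PosSemidef) (htr : ρ.trace = 1) : ρ ≤ 1 := by
  have sum_eigenvalues : ∑ i, hρ.1.eigenvalues i = 1 := by
    have := hρ.1.trace_eq_sum_eigenvalues
    rw [htr, ← RCLike.ofReal_sum] at this
    exact_mod_cast this.symm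
  rw [CFC.le_one_iff (R := ℝ) ρ hρ.1.isSelfAdjoint, hρ.1.spectrum_real_eq_range_eigenvalues]
  rintro _ ⟨i, rfl⟩
  rw [← sum_eigenvalues]
  exact single_le_sum (fun j _ => hρ.eigenvalues_nonneg j) (mem_univ i)

lemma Matrix.trace_mul_conjTranspose_mul_mono {m : Type*} [Fintype m] {A B : Matrix n n 𝕜}
    (hAB : A ≤ B) (X : Matrix m n 𝕜) : (A * (Xᴴ * X)).trace ≤ (B * (Xᴴ * X)).trace := by
  rw [← sub_nonneg, ← trace_sub, ← sub_mul, ← Matrix.mul_assoc, trace_mul_cycle]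
  exact (hAB.mul_mul_conjTranspose_same X).trace_nonneg

end Order

lemma trace_haarMoment3_mul_kron3 {N : ℕ} (A B C : Matrix (Fin N) (Fin N) ℂ) :
    (haarMoment3 N * kron3 A B C).trace
      = (A.trace * B.trace * C.trace + (A * B).trace * C.trace + (A * C).trace * B.trace
        + A.trace * (B * C).trace + (A * B * C).trace + (A * C * B).trace)
        / ((N : ℂ) * (N + 1) * (N + 2)) := by
  rw [haarMoment3, symProj3, smul_smul, ← mul_inv, div_mul_cancel₀ _ (by norm_num : (6 : ℂ) ≠ 0),
    smul_mul, sum_mul, trace_smul, trace_sum, sum_trace_permOp3_mul_kron3, smul_eq_mul,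
    inv_mul_eq_div]

lemma trace_haarMoment3_mul_kron3_of_trace {N : ℕ} {ρ O : Matrix (Fin N) (Fin N) ℂ}
    (hρ : ρ.trace = 1) (hO : O.trace = 0) :
    (haarMoment3 N * kron3 ρ O O).trace
      = ((O * O).trace + 2 * (ρ * (O * O)).trace) / ((N * (N + 1) * (N + 2) : ℕ) : ℂ) := by
  rw [trace_haarMoment3_mul_kron3, hρ, hO, Matrix.mul_assoc]
  push_cast
  ring

/-- Haar third-moment bound: for a density matrix `ρ` and traceless Hermitian `O₀`,
`2^n(2^n+1)² Tr(H₃ (ρ ⊗ O₀ ⊗ O₀)) ≤ 3 Tr(O₀²)`. -/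
theorem stmt6 (n : ℕ) (ρ O₀ : Matrix (Fin (2 ^ n)) (Fin (2 ^ n)) ℂ)
    (hρ : ρ.PosSemidef) (hρtr : ρ.trace = 1)
    (hO : O₀.IsHermitian) (hOtr : O₀.trace = 0) :
    (2 ^ n : ℝ) * ((2 ^ n : ℝ) + 1) ^ 2 *
        ((haarMoment3 (2 ^ n) * kron3 ρ O₀ O₀).trace).re
      ≤ 3 * ((O₀ * O₀).trace).re := by
  have hO₀_sq : O₀ * O₀ = O₀ᴴ * O₀ := by rw [hO.eq]
  have hT : 0 ≤ ((O₀ * O₀).trace).re :=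
    Complex.re_le_re (hO₀_sq ▸ (posSemidef_conjTranspose_mul_self O₀).trace_nonneg)
  have hRT : ((ρ * (O₀ * O₀)).trace).re ≤ ((O₀ * O₀).trace).re := by
    have := trace_mul_conjTranspose_mul_mono (hρ.le_one_of_trace_eq_one hρtr) O₀
    rw [Matrix.one_mul, ← hO₀_sq] at this
    exact Complex.re_le_re this
  rw [trace_haarMoment3_mul_kron3_of_trace hρtr hOtr, Complex.div_natCast_re]
  push_cast
  simp only [Complex.add_re, Complex.mul_re, Complex.re_ofNat, Complex.im_ofNat, zero_mul,
    sub_zero]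
  set T := ((O₀ * O₀).trace).re
  set R := ((ρ * (O₀ * O₀)).trace).re
  have hN : ((2 : ℝ) ^ n + 1) * (T + 2 * R) ≤ (2 ^ n + 2) * (3 * T) := by
    nlinarith [mul_nonneg (by positivity : (0 : ℝ) ≤ 2 ^ n + 1) (sub_nonneg.2 hRT)]
  rw [mul_div_assoc', div_le_iff₀ (by positivity)]
  nlinarith [mul_le_mul_of_nonneg_left hN (by positivity : (0 : ℝ) ≤ 2 ^ n * (2 ^ n + 1))]
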